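/- arXiv:2408.10353 — 9 statements merged into one kernel-verified Lean document; each statement's English description precedes it below -/
import Mathlib

section
/- Let B ∈ ℝ^{n×n} be a matrix with zero diagonal such that I - B can be transformed by some row permutation P₁ and column permutation P₂ into a lower triangular matrix (i.e., P₁ᵀ·(I-B)·P₂ is lower triangular). Then det(I - B) = 1; in particular, I - B is non-singular. -/
/-!
Conjugating by permutation matrices permutes rows by `σ₁⁻¹` and columns by `σ₂⁻¹`. The unit
diagonal entry of `I - B` in row `σ₁⁻¹ i` sits in column `(σ₂ σ₁⁻¹) i` of the triangular matrix,
so `σ₂ σ₁⁻¹ i ≤ i` for every `i`, which forces `σ₁ = σ₂`. The triangular matrix is then a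
simultaneous permutation of `I - B`: it has the same determinant and its diagonal is that of
`I - B`, all ones.
-/

open Equiv Matrix

theorem Function.Injective.eq_id_of_forall_apply_le {ι : Type*} [PartialOrder ι]
    [WellFoundedLT ι] {f : ι → ι} (hf : Function.Injective f) (h : ∀ i, f i ≤ i) : f = id := by
  funext i
  induction i using WellFoundedLT.induction with
  | _ i ih =>
    by_contra hne
    exact hne (hf (ih (f i) (lt_of_le_of_ne (h i) hne)))

namespace Matrix

variable {ι R : Type*}

theorem transpose_permMatrix_mul_mul_permMatrix [Fintype ι] [DecidableEq ι] [NonAssocSemiring R]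
    (σ₁ σ₂ : Perm ι) (A : Matrix ι ι R) :
    (σ₁.permMatrix R)ᵀ * A * σ₂.permMatrix R = A.submatrix σ₁.symm σ₂.symm := by
  rw [transpose_permMatrix, Perm.permMatrix, Perm.permMatrix, PEquiv.toMatrix_toPEquiv_mul,
    PEquiv.mul_toMatrix_toPEquiv, submatrix_submatrix]
  rfl

theorem eq_of_isLowerTriangular_submatrix [Zero R] [LinearOrder ι] [WellFoundedLT ι]
    {A : Matrix ι ι R} {e₁ e₂ : Perm ι} (hA : ∀ i, A i i ≠ 0)
    (h : (A.submatrix e₁ e₂).IsLowerTriangular) : e₁ = e₂ := by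
  have hle : ∀ i, (e₂.symm ∘ e₁) i ≤ i := fun i =>
    not_lt.mp fun hlt => hA (e₁ i) (by simpa using h (show OrderDual.toDual _ < _ from hlt))
  have hid := (e₂.symm.injective.comp e₁.injective).eq_id_of_forall_apply_le hle
  ext i
  simpa using congr_arg e₂ (congr_fun hid i)

theorem det_eq_prod_diag_of_isLowerTriangular_submatrix [CommRing R] [Fintype ι] [LinearOrder ι]
    [DecidableEq ι] {A : Matrix ι ι R} {e₁ e₂ : Perm ι} (hA : ∀ i, A i i ≠ 0)
    (h : (A.submatrix e₁ e₂).IsLowerTriangular) : A.det = ∏ i, A i i := by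
  obtain rfl := eq_of_isLowerTriangular_submatrix hA h
  rw [← det_submatrix_equiv_self e₁ A, det_of_isLowerTriangular _ h]
  exact Equiv.prod_comp e₁ fun i => A i i

end Matrix

/-- If `B` has zero diagonal and `I - B` can be brought to lower triangular form by
separate row and column permutations, then `det (I - B) = 1`; in particular `I - B`
is non-singular. -/
theorem stmt_4 (n : ℕ) (B : Matrix (Fin n) (Fin n) ℝ) (hB : ∀ i, B i i = 0)
    (σ₁ σ₂ : Equiv.Perm (Fin n))
    (hlt : ∀ i j : Fin n, i < j →
      ((σ₁.permMatrix ℝ).transpose * (1 - B) * σ₂.permMatrix ℝ) i j = 0) :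
    (1 - B).det = 1 ∧ (1 - B).det ≠ 0 := by
  have hdiag : ∀ i, (1 - B) i i = 1 := fun i => by simp [hB]
  have htri : ((1 - B).submatrix σ₁.symm σ₂.symm).IsLowerTriangular := fun i j hij => by
    simpa only [transpose_permMatrix_mul_mul_permMatrix] using hlt i j hij
  have hdet : (1 - B).det = 1 := by
    rw [det_eq_prod_diag_of_isLowerTriangular_submatrix (fun i => by simp [hdiag]) htri]
    simp [hdiag]
  exact ⟨hdet, hdet ▸ one_ne_zero⟩
end

section
/- Let A₁, A₂ ∈ ℝ^{n×n} be non-singular matrices with the same support (i.e., (A₁)_{i,j} ≠ 0 ⟺ (A₂)_{i,j} ≠ 0 for all i,j), such that A₁·A₁ᵀ = A₂·A₂ᵀ, and suppose there exist permutation matrices P₁, P₂ with P₁ᵀ·A₁·P₂ lower triangular. Then A₁ = A₂·D for some diagonal matrix D with diagonal entries ±1. -/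
/-!
Permuting rows and columns by `σ₁` and `σ₂` turns `A₁` and, by the support condition, also `A₂`
into lower triangular matrices `L₁`, `L₂` with `L₁ L₁ᵀ = L₂ L₂ᵀ`. Then `D = L₂⁻¹ L₁` is lower
triangular and orthogonal, so `Dᵀ = D⁻¹` is lower triangular as well: `D` is diagonal with
`D² = 1`. This is the uniqueness of the Cholesky factor up to the signs of its columns.
-/

open Equiv

namespace Matrix

variable {m K : Type*} [LinearOrder m]

theorem IsUpperTriangular.isDiag_of_isLowerTriangular {R : Type*} [Zero R] {M : Matrix m m R}
    (hU : M.IsUpperTriangular) (hL : M.IsLowerTriangular) : M.IsDiag := fun _ _ hij =>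
  (lt_or_gt_of_ne hij).elim (fun h => hL h) (fun h => hU h)

variable [Fintype m] [Field K]

theorem IsLowerTriangular.exists_sign_diagonal_of_mul_transpose_eq_one {D : Matrix m m K}
    (hD : D.IsLowerTriangular) (horth : D * Dᵀ = 1) :
    ∃ d : m → K, (∀ i, d i = 1 ∨ d i = -1) ∧ D = diagonal d := by
  have : Invertible D := invertibleOfRightInverse D Dᵀ horth
  have hDt : Dᵀ.IsLowerTriangular := by
    rw [← inv_eq_right_inv horth]
    exact blockTriangular_inv_of_blockTriangular hD
  have hU : D.IsUpperTriangular := fun _ _ h => hDt h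
  have hdiag : D = diagonal D.diag := (hU.isDiag_of_isLowerTriangular hD).diagonal_diag.symm
  refine ⟨D.diag, fun i => mul_self_eq_one_iff.mp ?_, hdiag⟩
  rw [hdiag, diagonal_transpose, diagonal_mul_diagonal, ← diagonal_one] at horth
  exact congr_fun (diagonal_injective horth) i

theorem IsLowerTriangular.exists_eq_mul_sign_diagonal_of_mul_transpose_eq
    {L₁ L₂ : Matrix m m K} (hL₁ : L₁.IsLowerTriangular) (hL₂ : L₂.IsLowerTriangular)
    (hdet : IsUnit L₂.det) (h : L₁ * L₁ᵀ = L₂ * L₂ᵀ) :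
    ∃ d : m → K, (∀ i, d i = 1 ∨ d i = -1) ∧ L₁ = L₂ * diagonal d := by
  have : Invertible L₂ := invertibleOfIsUnitDet L₂ hdet
  have hD : (L₂⁻¹ * L₁).IsLowerTriangular :=
    (blockTriangular_inv_of_blockTriangular hL₂).mul hL₁
  have horth : L₂⁻¹ * L₁ * (L₂⁻¹ * L₁)ᵀ = 1 := by
    rw [transpose_mul, transpose_nonsing_inv, Matrix.mul_assoc, ← Matrix.mul_assoc L₁, h,
      ← Matrix.mul_assoc, ← Matrix.mul_assoc, inv_mul_of_invertible, Matrix.one_mul,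
      mul_inv_of_invertible]
  obtain ⟨d, hd, hDd⟩ := hD.exists_sign_diagonal_of_mul_transpose_eq_one horth
  exact ⟨d, hd, by rw [← hDd, mul_inv_cancel_left_of_invertible]⟩

theorem transpose_permMatrix_mul_mul_permMatrix_s6 {n R : Type*} [DecidableEq n] [Fintype n]
    [NonAssocSemiring R] (σ τ : Perm n) (A : Matrix n n R) :
    (σ.permMatrix R)ᵀ * A * τ.permMatrix R = A.submatrix σ.symm τ.symm := by
  rw [transpose_permMatrix, PEquiv.toMatrix_toPEquiv_mul, PEquiv.mul_toMatrix_toPEquiv,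
    submatrix_submatrix]
  rfl

end Matrix

open Matrix

theorem stmt_6_general (n : ℕ) (A₁ A₂ : Matrix (Fin n) (Fin n) ℝ)
    (h₂ : A₂.det ≠ 0)
    (hsupp : ∀ i j, A₁ i j ≠ 0 ↔ A₂ i j ≠ 0)
    (hcov : A₁ * A₁.transpose = A₂ * A₂.transpose)
    (σ₁ σ₂ : Equiv.Perm (Fin n))
    (hlt : ∀ i j : Fin n, i < j →
      ((σ₁.permMatrix ℝ).transpose * A₁ * σ₂.permMatrix ℝ) i j = 0) :
    ∃ d : Fin n → ℝ, (∀ i, d i = 1 ∨ d i = -1) ∧ A₁ = A₂ * Matrix.diagonal d := by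
  have hL₁ : (A₁.submatrix σ₁.symm σ₂.symm).IsLowerTriangular := fun i j hij => by
    rw [← transpose_permMatrix_mul_mul_permMatrix_s6]
    exact hlt i j hij
  have hL₂ : (A₂.submatrix σ₁.symm σ₂.symm).IsLowerTriangular := fun i j hij =>
    not_not.mp fun h => (hsupp _ _).mpr h (hL₁ hij)
  have hdet : IsUnit (A₂.submatrix σ₁.symm σ₂.symm).det := by
    rw [isUnit_iff_ne_zero, ← abs_ne_zero, abs_det_submatrix_equiv_equiv, abs_ne_zero]
    exact h₂
  have hcov' : A₁.submatrix σ₁.symm σ₂.symm * (A₁.submatrix σ₁.symm σ₂.symm)ᵀ =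
      A₂.submatrix σ₁.symm σ₂.symm * (A₂.submatrix σ₁.symm σ₂.symm)ᵀ := by
    simp only [transpose_submatrix, submatrix_mul_equiv, hcov]
  obtain ⟨d, hd, hA⟩ := hL₁.exists_eq_mul_sign_diagonal_of_mul_transpose_eq hL₂ hdet hcov'
  refine ⟨d ∘ σ₂, fun i => hd (σ₂ i), ?_⟩
  ext a b
  simpa [mul_diagonal] using congr_fun₂ hA (σ₁ a) (σ₂ b)

/-- Two non-singular matrices with the same support, equal `A Aᵀ`, where `A₁` can be
brought to lower triangular form by separate row/column permutations, differ only in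
sign changes of columns. -/
theorem stmt_6 (n : ℕ) (A₁ A₂ : Matrix (Fin n) (Fin n) ℝ)
    (h₁ : A₁.det ≠ 0) (h₂ : A₂.det ≠ 0)
    (hsupp : ∀ i j, A₁ i j ≠ 0 ↔ A₂ i j ≠ 0)
    (hcov : A₁ * A₁.transpose = A₂ * A₂.transpose)
    (σ₁ σ₂ : Equiv.Perm (Fin n))
    (hlt : ∀ i j : Fin n, i < j →
      ((σ₁.permMatrix ℝ).transpose * A₁ * σ₂.permMatrix ℝ) i j = 0) :
    ∃ d : Fin n → ℝ, (∀ i, d i = 1 ∨ d i = -1) ∧ A₁ = A₂ * Matrix.diagonal d :=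
  stmt_6_general n A₁ A₂ h₂ hsupp hcov σ₁ σ₂ hlt
end

section
/- If A ∈ ℝ^{n×n} is lower triangular with all diagonal entries nonzero, and P₁, P₂ are permutation matrices such that P₁ᵀ·A·P₂ has all diagonal entries nonzero, then P₁ = P₂. -/
/-- Shimizu et al. (2006), Lemma 1: if `A` is lower triangular with nonzero diagonal
and `P₁ᵀ * A * P₂` has all diagonal entries nonzero, then `P₁ = P₂`. -/
theorem stmt_10 (n : ℕ) (A : Matrix (Fin n) (Fin n) ℝ)
    (hlt : ∀ i j : Fin n, i < j → A i j = 0) (hdiag : ∀ i, A i i ≠ 0)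
    (σ₁ σ₂ : Equiv.Perm (Fin n))
    (h : ∀ i, ((σ₁.permMatrix ℝ).transpose * A * σ₂.permMatrix ℝ) i i ≠ 0) :
    σ₁.permMatrix ℝ = σ₂.permMatrix ℝ := by
  have htrans : (σ₁.permMatrix ℝ).transpose = (σ₁⁻¹).permMatrix ℝ := by
    rw [Equiv.Perm.permMatrix, Equiv.Perm.permMatrix, ← PEquiv.toMatrix_symm,
      ← Equiv.toPEquiv_symm]
    rfl
  have hentry : ∀ i, A (σ₁⁻¹ i) (σ₂⁻¹ i) ≠ 0 := by
    intro i
    have := h i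
    rwa [htrans, Equiv.Perm.permMatrix, Equiv.Perm.permMatrix,
      PEquiv.toMatrix_toPEquiv_mul, PEquiv.mul_toMatrix_toPEquiv] at this
  have hle : ∀ i, σ₂⁻¹ i ≤ σ₁⁻¹ i := by
    intro i
    by_contra hc
    push_neg at hc
    exact hentry i (hlt _ _ hc)
  have heq : ∀ i, σ₂⁻¹ i = σ₁⁻¹ i := by
    have hsum : ∑ i, ((σ₂⁻¹ i : Fin n) : ℕ) = ∑ i, ((σ₁⁻¹ i : Fin n) : ℕ) := by
      rw [Equiv.sum_comp (σ₂⁻¹ : Equiv.Perm (Fin n)) (fun x : Fin n => (x : ℕ)),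
        Equiv.sum_comp (σ₁⁻¹ : Equiv.Perm (Fin n)) (fun x : Fin n => (x : ℕ))]
    intro i
    have := (Finset.sum_eq_sum_iff_of_le (fun i _ => Fin.le_iff_val_le_val.mp (hle i))).mp
      hsum i (Finset.mem_univ i)
    exact Fin.ext this
  have : σ₂⁻¹ = σ₁⁻¹ := Equiv.ext heq
  have : σ₁ = σ₂ := by
    have := congrArg Inv.inv this
    simpa using this.symm
  rw [this]
end

section
/- If the directed bipartite graph from sources to observed variables defined by a mixing matrix A ∈ ℝ^{n×n} (with an edge s_j → x_i whenever A_{i,j} ≠ 0) contains no undirected cycle (i.e., is a polytree/forest as an undirected graph), then there exist permutation matrices P₁, P₂ such that P₁ᵀ·A·P₂ is lower triangular. -/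
/-!
A forest has fewer edges than vertices, and the edges of the bipartite graph of a square matrix
are its nonzero entries; so some column of `A` has at most one nonzero entry, say in row `r`.
Moving that column and row `r` to the last position leaves zeros above the diagonal in the last
column, and the minor obtained by deleting them again has a forest as bipartite graph. Induction
on `n` finishes the proof.
-/

open Finset SimpleGraph

namespace SimpleGraph

variable {V : Type*} {G : SimpleGraph V}

theorem IsAcyclic.card_edgeFinset_lt [Fintype V] [Nonempty V] [Fintype G.edgeSet]
    (hG : G.IsAcyclic) : #G.edgeFinset < Fintype.card V := by
  classical
  obtain ⟨T, hGT, -, hT⟩ := connected_top.exists_isTree_le_of_le_of_isAcyclic le_top hG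
  have hT_card := hT.card_edgeFinset
  have hle : #G.edgeFinset ≤ #T.edgeFinset := card_le_card (edgeFinset_mono hGT)
  omega

end SimpleGraph

namespace Matrix

section BipartiteGraph

variable {m n R : Type*} [Zero R]

/-- Column `j` is the vertex `inl j`, row `i` the vertex `inr i`, as in the theorem below. -/
def bipartiteGraph (A : Matrix m n R) : SimpleGraph (n ⊕ m) :=
  SimpleGraph.fromRel fun u v => ∃ i j, u = Sum.inl j ∧ v = Sum.inr i ∧ A i j ≠ 0

variable {A : Matrix m n R}

@[simp]
theorem bipartiteGraph_adj_inl_inr {j : n} {i : m} :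
    A.bipartiteGraph.Adj (.inl j) (.inr i) ↔ A i j ≠ 0 := by
  simp [bipartiteGraph]

@[simp]
theorem bipartiteGraph_adj_inr_inl {j : n} {i : m} :
    A.bipartiteGraph.Adj (.inr i) (.inl j) ↔ A i j ≠ 0 := by
  simp [bipartiteGraph]

@[simp]
theorem not_bipartiteGraph_adj_inl_inl {j j' : n} : ¬A.bipartiteGraph.Adj (.inl j) (.inl j') := by
  simp [bipartiteGraph]

@[simp]
theorem not_bipartiteGraph_adj_inr_inr {i i' : m} : ¬A.bipartiteGraph.Adj (.inr i) (.inr i') := by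
  simp [bipartiteGraph]

theorem bipartiteGraph_isBipartiteWith [Fintype m] [Fintype n] :
    A.bipartiteGraph.IsBipartiteWith ↑(univ.map .inl : Finset (n ⊕ m))
      ↑(univ.map .inr : Finset (n ⊕ m)) where
  disjoint := by simp [Set.disjoint_left]
  mem_of_adj u v h := by
    simp only [bipartiteGraph, fromRel_adj] at h
    aesop

theorem neighborFinset_bipartiteGraph_inl [Fintype m] [DecidableEq R] (j : n)
    [Fintype (A.bipartiteGraph.neighborSet (.inl j))] :
    A.bipartiteGraph.neighborFinset (.inl j) = ({i | A i j ≠ 0} : Finset m).map .inr := by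
  ext (_ | i) <;> simp

theorem degree_bipartiteGraph_inl [Fintype m] [DecidableEq R] (j : n)
    [Fintype (A.bipartiteGraph.neighborSet (.inl j))] :
    A.bipartiteGraph.degree (.inl j) = #{i | A i j ≠ 0} := by
  rw [← card_neighborFinset_eq_degree, neighborFinset_bipartiteGraph_inl, card_map]

theorem exists_col_eq_zero_of_ne_of_isAcyclic [Fintype m] [Fintype n] [Nonempty m]
    (hmn : Fintype.card m ≤ Fintype.card n) (hA : A.bipartiteGraph.IsAcyclic) :
    ∃ j i, ∀ i', i' ≠ i → A i' j = 0 := by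
  classical
  have hsum : ∑ j, #{i | A i j ≠ 0} < Fintype.card n + Fintype.card m :=
    calc ∑ j, #{i | A i j ≠ 0} = ∑ j, A.bipartiteGraph.degree (.inl j) := by
          simp only [degree_bipartiteGraph_inl]
      _ = #A.bipartiteGraph.edgeFinset := by
          rw [← isBipartiteWith_sum_degrees_eq_card_edges bipartiteGraph_isBipartiteWith, sum_map]
          rfl
      _ < Fintype.card n + Fintype.card m := by
          simpa using hA.card_edgeFinset_lt
  obtain ⟨j, hj⟩ : ∃ j, #{i | A i j ≠ 0} ≤ 1 := by
    by_contra! h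
    have hsum_ge : ∑ _j : n, 2 ≤ ∑ j, #{i | A i j ≠ 0} := sum_le_sum fun j _ => h j
    simp only [sum_const, card_univ, smul_eq_mul] at hsum_ge
    omega
  obtain ⟨i, hi⟩ := card_le_one_iff_subset_singleton.mp hj
  exact ⟨j, i, fun i' hi' => by_contra fun h => hi' (mem_singleton.mp (hi (by simpa using h)))⟩

theorem bipartiteGraph_submatrix {l o : Type*} (f : l → m) (g : o → n) :
    (A.submatrix f g).bipartiteGraph = A.bipartiteGraph.comap (Sum.map g f) := by
  ext (j | i) (j' | i') <;> simp

theorem isAcyclic_bipartiteGraph_submatrix {l o : Type*} {f : l → m} {g : o → n}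
    (hA : A.bipartiteGraph.IsAcyclic) (hf : Function.Injective f) (hg : Function.Injective g) :
    (A.submatrix f g).bipartiteGraph.IsAcyclic := by
  rw [bipartiteGraph_submatrix]
  exact hA.of_comap ⟨Sum.map g f, hg.sumMap hf⟩

end BipartiteGraph

theorem transpose_permMatrix_mul_mul_permMatrix_s13 {m n R : Type*} [Fintype m] [Fintype n]
    [DecidableEq m] [DecidableEq n] [Semiring R] (σ₁ : Equiv.Perm m) (σ₂ : Equiv.Perm n)
    (A : Matrix m n R) :
    (σ₁.permMatrix R)ᵀ * A * σ₂.permMatrix R = A.submatrix ⇑σ₁⁻¹ ⇑σ₂⁻¹ := by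
  rw [transpose_permMatrix, PEquiv.toMatrix_toPEquiv_mul, PEquiv.mul_toMatrix_toPEquiv,
    submatrix_submatrix]
  rfl

end Matrix

namespace Equiv.Perm

variable {n : ℕ}

def extendLast (σ : Perm (Fin n)) (p : Fin (n + 1)) : Perm (Fin (n + 1)) :=
  finSuccEquivLast.trans ((optionCongr σ).trans (finSuccEquiv' p).symm)

@[simp]
theorem extendLast_last (σ : Perm (Fin n)) (p : Fin (n + 1)) :
    σ.extendLast p (Fin.last n) = p := by
  simp [extendLast, finSuccEquivLast_last]

@[simp]
theorem extendLast_castSucc (σ : Perm (Fin n)) (p : Fin (n + 1)) (k : Fin n) :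
    σ.extendLast p k.castSucc = p.succAbove (σ k) := by
  simp [extendLast, finSuccEquivLast_castSucc, finSuccEquiv'_symm_some]

end Equiv.Perm

namespace Matrix

theorem exists_perm_blockTriangular_submatrix_of_isAcyclic {R : Type*} [Zero R] {n : ℕ}
    (A : Matrix (Fin n) (Fin n) R) (hA : A.bipartiteGraph.IsAcyclic) :
    ∃ σ₁ σ₂ : Equiv.Perm (Fin n), (A.submatrix σ₁ σ₂).BlockTriangular OrderDual.toDual := by
  induction n with
  | zero => exact ⟨1, 1, fun i => i.elim0⟩
  | succ n ih =>
    obtain ⟨c, r, hcol⟩ := exists_col_eq_zero_of_ne_of_isAcyclic le_rfl hA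
    obtain ⟨τ₁, τ₂, hτ⟩ := ih (A.submatrix r.succAbove c.succAbove)
      (isAcyclic_bipartiteGraph_submatrix hA Fin.succAbove_right_injective
        Fin.succAbove_right_injective)
    refine ⟨τ₁.extendLast r, τ₂.extendLast c, fun i j (hij : i < j) => ?_⟩
    rcases Fin.eq_castSucc_or_eq_last j with ⟨j, rfl⟩ | rfl
    · obtain ⟨i, rfl⟩ := Fin.exists_castSucc_eq.mpr
        (Fin.ne_last_of_lt (hij.trans (Fin.castSucc_lt_last j)))
      simpa using hτ (Fin.castSucc_lt_castSucc_iff.mp hij)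
    · obtain ⟨i, rfl⟩ := Fin.exists_castSucc_eq.mpr (Fin.ne_last_of_lt hij)
      simpa using hcol _ (Fin.succAbove_ne r _)

end Matrix

/-- If the bipartite connective structure of a mixing matrix `A` (edge between
source `j` and observed variable `i` iff `A i j ≠ 0`) is acyclic as an undirected
graph (a polytree/forest), then `A` can be brought to lower triangular form by
separate row and column permutations. -/
theorem stmt_13 (n : ℕ) (A : Matrix (Fin n) (Fin n) ℝ)
    (hforest : (SimpleGraph.fromRel (fun u v : Fin n ⊕ Fin n =>
        ∃ i j : Fin n, u = Sum.inl j ∧ v = Sum.inr i ∧ A i j ≠ 0)).IsAcyclic) :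
    ∃ σ₁ σ₂ : Equiv.Perm (Fin n), ∀ i j : Fin n, i < j →
      ((σ₁.permMatrix ℝ).transpose * A * σ₂.permMatrix ℝ) i j = 0 := by
  obtain ⟨τ₁, τ₂, hτ⟩ := A.exists_perm_blockTriangular_submatrix_of_isAcyclic hforest
  refine ⟨τ₁⁻¹, τ₂⁻¹, fun i j hij => ?_⟩
  rw [Matrix.transpose_permMatrix_mul_mul_permMatrix_s13, inv_inv, inv_inv]
  exact hτ hij
end

section
/- Suppose a matrix A ∈ ℝ^{n×n} satisfies: for every column index i, there exists a set of row indices I ⊆ [n] such that the intersection over j ∈ I of supp(a_{j,:}) (the support of row j) equals exactly {i}. Then no column's support is contained in another column's support (columns are not nested). -/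
/-- If for every column index `i` there is a set of rows whose row supports intersect
exactly in `{i}`, then no column support is contained in another column support. -/
theorem stmt_15 (n : ℕ) (A : Matrix (Fin n) (Fin n) ℝ)
    (h : ∀ i : Fin n, ∃ I : Set (Fin n),
      (⋂ j ∈ I, {k : Fin n | A j k ≠ 0}) = {i}) :
    ∀ i j : Fin n, i ≠ j →
      ¬ ({l : Fin n | A l i ≠ 0} ⊆ {l : Fin n | A l j ≠ 0}) := by
  intro i j hij hsub
  obtain ⟨I, hI⟩ := h i
  -- j is not in the intersection
  have hj : j ∉ ⋂ l ∈ I, {k : Fin n | A l k ≠ 0} := by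
    rw [hI]; exact fun hj => hij (hj.symm)
  rw [Set.mem_iInter₂] at hj
  push_neg at hj
  obtain ⟨l, hlI, hlj⟩ := hj
  simp only [Set.mem_setOf_eq, not_not] at hlj
  -- i is in the intersection, so A l i ≠ 0
  have hi : i ∈ ⋂ l ∈ I, {k : Fin n | A l k ≠ 0} := by rw [hI]; rfl
  rw [Set.mem_iInter₂] at hi
  have := hsub (hi l hlI)
  exact this hlj
end

section
/- Let A₁ₕ ∈ ℝ^{3×3} be the support pattern [[×,0,0],[×,×,0],[×,0,×]] (all five indicated entries nonzero). Then for every pair of distinct columns i, j, the supports differ in at least two entries, but for k = 1 and I = {1,2}, the inequality |supp(a₁) ∪ supp(a₂)| - rank(overlap(A_{I})) > |supp(a₁)| fails. -/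
open scoped Classical

/-- For the 3×3 support pattern `[[×,0,0],[×,×,0],[×,0,×]]`: every pair of column
supports differ in at least two entries (structural variability holds), but for
`k = 1` and `I = {1,2}` the inequality
`|supp(a₁) ∪ supp(a₂)| - rank(overlap(A_I)) > |supp(a₁)|` fails (the rank is ≥ 1). -/
theorem stmt_16 (A : Matrix (Fin 3) (Fin 3) ℝ)
    (h11 : A 0 0 ≠ 0) (h21 : A 1 0 ≠ 0) (h31 : A 2 0 ≠ 0)
    (h22 : A 1 1 ≠ 0) (h33 : A 2 2 ≠ 0)
    (h12 : A 0 1 = 0) (h13 : A 0 2 = 0) (h23 : A 1 2 = 0) (h32 : A 2 1 = 0) :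
    (∀ i j : Fin 3, i ≠ j →
      2 ≤ (Finset.univ.filter (fun l => A l i ≠ 0) ∪ Finset.univ.filter (fun l => A l j ≠ 0)).card
        - (Finset.univ.filter (fun l => A l i ≠ 0) ∩ Finset.univ.filter (fun l => A l j ≠ 0)).card)
    ∧ ∀ r : ℕ, 1 ≤ r →
      ¬ ((Finset.univ.filter (fun l => A l 0 ≠ 0) ∪ Finset.univ.filter (fun l => A l 1 ≠ 0)).card - r
          > (Finset.univ.filter (fun l => A l 0 ≠ 0)).card) := by
  have e0 : Finset.univ.filter (fun l => A l 0 ≠ 0) = (Finset.univ : Finset (Fin 3)) := by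
    ext l; fin_cases l <;> simp [h11, h21, h31]
  have e1 : Finset.univ.filter (fun l => A l 1 ≠ 0) = ({1} : Finset (Fin 3)) := by
    ext l; fin_cases l <;> simp [h12, h22, h32]
  have e2 : Finset.univ.filter (fun l => A l 2 ≠ 0) = ({2} : Finset (Fin 3)) := by
    ext l; fin_cases l <;> simp [h13, h23, h33]
  constructor
  · intro i j hij
    fin_cases i <;> fin_cases j <;> simp_all [e0, e1, e2] <;> decide
  · intro r hr
    rw [e0, e1]
    have : (Finset.univ ∪ ({1} : Finset (Fin 3))) = Finset.univ := by decide
    rw [this]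
    simp [Finset.card_univ]
end

section
/- Suppose A ∈ ℝ^{n×n} equals (I - B)·Ω^{-1/2} up to signed column permutation, where B has zero diagonal and Ω is a positive diagonal matrix. If B, viewed as the adjacency matrix of a directed graph (edge j → i iff B_{i,j} ≠ 0), represents a directed acyclic graph, then there exist permutation matrices P₁, P₂ such that P₁ᵀ·A·P₂ is lower triangular. -/
lemma permMatrix_transpose_eq {n : ℕ} (τ : Equiv.Perm (Fin n)) :
    (τ.permMatrix ℝ).transpose = (τ⁻¹).permMatrix ℝ := by
  ext a b
  simp only [Equiv.Perm.permMatrix, Matrix.transpose_apply, PEquiv.toMatrix_apply,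
    Equiv.toPEquiv_apply, Option.mem_def, Option.some.injEq]
  by_cases h : τ b = a
  · rw [if_pos h, if_pos]
    simp [Equiv.Perm.inv_def, Equiv.symm_apply_eq, h]
  · rw [if_neg h, if_neg]
    simp only [Equiv.Perm.inv_def, Equiv.symm_apply_eq]
    exact fun hc => h hc.symm

lemma permMatrix_transpose_mul {n : ℕ} (τ : Equiv.Perm (Fin n))
    (M : Matrix (Fin n) (Fin n) ℝ) (i j : Fin n) :
    ((τ.permMatrix ℝ).transpose * M) i j = M (τ.symm i) j := by
  rw [permMatrix_transpose_eq, Equiv.Perm.permMatrix, PEquiv.toMatrix_toPEquiv_mul]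
  rfl

lemma mul_permMatrix {n : ℕ} (τ : Equiv.Perm (Fin n))
    (M : Matrix (Fin n) (Fin n) ℝ) (i j : Fin n) :
    (M * τ.permMatrix ℝ) i j = M i (τ.symm j) := by
  rw [Equiv.Perm.permMatrix, PEquiv.mul_toMatrix_toPEquiv]
  rfl

/-- If `A = (I - B) * Ω^{-1/2}` up to signed column permutation, `B` has zero
diagonal, `Ω` is positive diagonal, and `B` represents a DAG (some simultaneous
permutation makes it strictly lower triangular), then `A` can be brought to lower
triangular form by separate row and column permutations. -/
theorem stmt_17 (n : ℕ) (A B : Matrix (Fin n) (Fin n) ℝ) (ω d : Fin n → ℝ)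
    (σ : Equiv.Perm (Fin n))
    (hB : ∀ i, B i i = 0) (hω : ∀ i, 0 < ω i) (hd : ∀ i, d i = 1 ∨ d i = -1)
    (hA : A = (1 - B) * Matrix.diagonal (fun i => (ω i) ^ (-(1 : ℝ) / 2))
            * (σ.permMatrix ℝ * Matrix.diagonal d))
    (hdag : ∃ τ : Equiv.Perm (Fin n), ∀ i j : Fin n, i ≤ j →
      ((τ.permMatrix ℝ).transpose * B * τ.permMatrix ℝ) i j = 0) :
    ∃ σ₁ σ₂ : Equiv.Perm (Fin n), ∀ i j : Fin n, i < j →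
      ((σ₁.permMatrix ℝ).transpose * A * σ₂.permMatrix ℝ) i j = 0 := by
  obtain ⟨τ, hτ⟩ := hdag
  refine ⟨τ, τ * σ⁻¹, fun i j hij => ?_⟩
  have hBij : B (τ.symm i) (τ.symm j) = 0 := by
    have := hτ i j hij.le
    rwa [mul_permMatrix, permMatrix_transpose_mul] at this
  rw [mul_permMatrix, permMatrix_transpose_mul, hA]
  have hsymm : (τ * σ⁻¹).symm j = σ (τ.symm j) := rfl
  rw [hsymm, ← Matrix.mul_assoc, Matrix.mul_diagonal, mul_permMatrix,
    Matrix.mul_diagonal, Equiv.symm_apply_apply]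
  have hne : τ.symm i ≠ τ.symm j := fun h => hij.ne (τ.symm.injective h)
  rw [Matrix.sub_apply, Matrix.one_apply_ne hne, hBij]
  ring
end

section
/- Suppose A ∈ ℝ^{n×n} equals (I - B)·Ω^{-1/2} up to signed column permutation, where B has zero diagonal and Ω is a positive diagonal matrix, and suppose there exist permutation matrices P₁, P₂ such that P₁ᵀ·A·P₂ is lower triangular. Then there exists a permutation matrix Q such that Qᵀ·B·Q is strictly lower triangular (i.e., B represents a DAG). -/
/-- Entry formula for a matrix conjugated by permutation matrices. -/
lemma perm_conj_apply {n : ℕ} (σ₁ σ₂ : Equiv.Perm (Fin n)) (M : Matrix (Fin n) (Fin n) ℝ)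
    (i j : Fin n) :
    ((σ₁.permMatrix ℝ).transpose * M * σ₂.permMatrix ℝ) i j = M (σ₁⁻¹ i) (σ₂⁻¹ j) := by
  have h1 : (σ₁.permMatrix ℝ).transpose = (σ₁⁻¹).permMatrix ℝ := by
    unfold Equiv.Perm.permMatrix
    rw [← PEquiv.toMatrix_symm, ← Equiv.toPEquiv_symm]
    rfl
  rw [h1]
  unfold Equiv.Perm.permMatrix
  rw [PEquiv.toMatrix_toPEquiv_mul, PEquiv.mul_toMatrix_toPEquiv]
  simp only [Matrix.submatrix_apply]
  rfl

/-- If two permutations have "π i ≠ ρ j whenever i < j", they are equal. -/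
lemma perm_eq_of_lt_ne {n : ℕ} (π ρ : Equiv.Perm (Fin n))
    (h : ∀ i j : Fin n, i < j → π i ≠ ρ j) : ∀ j, π j = ρ j := by
  have key : ∀ j : Fin n, Finset.image ρ (Finset.Ici j) = Finset.image π (Finset.Ici j) := by
    intro j
    apply Finset.eq_of_subset_of_card_le
    · intro x hx
      obtain ⟨j', hj', rfl⟩ := Finset.mem_image.mp hx
      refine Finset.mem_image.mpr ⟨π⁻¹ (ρ j'), ?_, by simp⟩
      rw [Finset.mem_Ici] at hj' ⊢
      by_contra hc
      push_neg at hc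
      exact h _ j' (lt_of_lt_of_le hc hj') (by simp)
    · rw [Finset.card_image_of_injective _ π.injective,
        Finset.card_image_of_injective _ ρ.injective]
  intro j
  have hm : π j ∈ Finset.image ρ (Finset.Ici j) := by
    rw [key j]
    exact Finset.mem_image_of_mem π (Finset.mem_Ici.mpr le_rfl)
  obtain ⟨j', hj', hval⟩ := Finset.mem_image.mp hm
  rw [Finset.mem_Ici] at hj'
  rcases eq_or_lt_of_le hj' with rfl | hlt
  · exact hval.symm
  · exact absurd hval.symm (h j j' hlt)

/-- If `A = (I - B) * Ω^{-1/2}` up to signed column permutation, `B` has zero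
diagonal, `Ω` is positive diagonal, and `A` can be brought to lower triangular form
by separate row and column permutations, then `B` represents a DAG: some simultaneous
equal row and column permutation makes it strictly lower triangular. -/
theorem stmt_18 (n : ℕ) (A B : Matrix (Fin n) (Fin n) ℝ) (ω d : Fin n → ℝ)
    (σ : Equiv.Perm (Fin n))
    (hB : ∀ i, B i i = 0) (hω : ∀ i, 0 < ω i) (hd : ∀ i, d i = 1 ∨ d i = -1)
    (hA : A = (1 - B) * Matrix.diagonal (fun i => (ω i) ^ (-(1 : ℝ) / 2))
            * (σ.permMatrix ℝ * Matrix.diagonal d))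
    (hlt : ∃ σ₁ σ₂ : Equiv.Perm (Fin n), ∀ i j : Fin n, i < j →
      ((σ₁.permMatrix ℝ).transpose * A * σ₂.permMatrix ℝ) i j = 0) :
    ∃ τ : Equiv.Perm (Fin n), ∀ i j : Fin n, i ≤ j →
      ((τ.permMatrix ℝ).transpose * B * τ.permMatrix ℝ) i j = 0 := by
  obtain ⟨σ₁, σ₂, htri⟩ := hlt
  -- entry formula for A
  have hAentry : ∀ i j : Fin n,
      A i j = (1 - B) i (σ⁻¹ j) * (ω (σ⁻¹ j)) ^ (-(1 : ℝ) / 2) * d j := by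
    intro i j
    have : A = ((1 - B) * Matrix.diagonal (fun i => (ω i) ^ (-(1 : ℝ) / 2))
        * σ.permMatrix ℝ) * Matrix.diagonal d := by
      rw [hA, ← Matrix.mul_assoc]
    rw [this, Matrix.mul_diagonal]
    unfold Equiv.Perm.permMatrix
    rw [PEquiv.mul_toMatrix_toPEquiv]
    rw [Matrix.submatrix_apply, Matrix.mul_diagonal]
    rfl
  -- the scalar factor is nonzero
  have hc : ∀ j : Fin n, (ω (σ⁻¹ j)) ^ (-(1 : ℝ) / 2) * d j ≠ 0 := by
    intro j
    apply mul_ne_zero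
    · exact (Real.rpow_pos_of_pos (hω _) _).ne'
    · rcases hd j with h | h <;> rw [h] <;> norm_num
  set π : Equiv.Perm (Fin n) := σ₁⁻¹ with hπ
  set ρ : Equiv.Perm (Fin n) := σ⁻¹ * σ₂⁻¹ with hρ
  -- (1 - B) (π i) (ρ j) = 0 for i < j
  have hM : ∀ i j : Fin n, i < j → (1 - B) (π i) (ρ j) = 0 := by
    intro i j hij
    have h0 := htri i j hij
    rw [perm_conj_apply, hAentry] at h0
    rcases mul_eq_zero.mp (by rw [mul_assoc] at h0; exact h0) with h | h
    · exact h
    · exact absurd h (hc _)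
  -- π = ρ
  have hπρ : ∀ j, π j = ρ j := by
    apply perm_eq_of_lt_ne
    intro i j hij hne
    have h0 := hM i j hij
    rw [← hne] at h0
    simp only [Matrix.sub_apply, Matrix.one_apply_eq, hB] at h0
    norm_num at h0
  -- B (π i) (π j) = 0 for i ≤ j
  have hBz : ∀ i j : Fin n, i ≤ j → B (π i) (π j) = 0 := by
    intro i j hij
    rcases eq_or_lt_of_le hij with rfl | hlt'
    · exact hB _
    · have h0 := hM i j hlt'
      rw [← hπρ j] at h0
      have hne : π i ≠ π j := fun h => absurd (π.injective h) hlt'.ne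
      simpa [Matrix.sub_apply, Matrix.one_apply, hne] using h0
  refine ⟨π⁻¹, fun i j hij => ?_⟩
  rw [perm_conj_apply]
  simpa using hBz i j hij
end

section
/- Let A ∈ ℝ^{n×n} be a lower triangular 0-1 pattern and consider the Jacobian of the map A ↦ A·Aᵀ restricted to the free (potentially nonzero) entries of A, evaluated at A = I_n. Then this Jacobian matrix has full column rank equal to the number of free entries ‖A‖₀. -/
/-- For a lower triangular support pattern `s`, the Jacobian of `A ↦ A * Aᵀ` with
respect to the free entries of `A`, evaluated at `A = I`, has full column rank
`|s| = ‖ξ‖₀`.  Rows are indexed by pairs `(i,j)`, columns by free entries `(k,l) ∈ s`,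
with entry `∂Σ_{i,j}/∂a_{k,l}` equal to `2·I_{i,l}` if `i = j = k`; `I_{j,l}` if
`i ≠ j, k = i`; `I_{i,l}` if `i ≠ j, k = j`; and `0` otherwise. -/
theorem stmt_19 (n : ℕ) (s : Finset (Fin n × Fin n)) (hlt : ∀ p ∈ s, p.2 ≤ p.1) :
    (Matrix.of (fun (ij : Fin n × Fin n) (kl : {p : Fin n × Fin n // p ∈ s}) =>
      if ij.1 = ij.2 then
        (if kl.val.1 = ij.1 then 2 * (1 : Matrix (Fin n) (Fin n) ℝ) ij.1 kl.val.2 else 0)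
      else if kl.val.1 = ij.1 then (1 : Matrix (Fin n) (Fin n) ℝ) ij.2 kl.val.2
      else if kl.val.1 = ij.2 then (1 : Matrix (Fin n) (Fin n) ℝ) ij.1 kl.val.2
      else 0)).rank = s.card := by
  classical
  set M : Matrix (Fin n × Fin n) {p : Fin n × Fin n // p ∈ s} ℝ :=
    Matrix.of (fun (ij : Fin n × Fin n) (kl : {p : Fin n × Fin n // p ∈ s}) =>
      if ij.1 = ij.2 then
        (if kl.val.1 = ij.1 then 2 * (1 : Matrix (Fin n) (Fin n) ℝ) ij.1 kl.val.2 else 0)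
      else if kl.val.1 = ij.1 then (1 : Matrix (Fin n) (Fin n) ℝ) ij.2 kl.val.2
      else if kl.val.1 = ij.2 then (1 : Matrix (Fin n) (Fin n) ℝ) ij.1 kl.val.2
      else 0) with hM
  -- key: the submatrix of rows indexed by `s` is diagonal with nonzero entries
  have key : ∀ (p q : {p : Fin n × Fin n // p ∈ s}),
      M (p.val.1, p.val.2) q = if q = p then (if p.val.1 = p.val.2 then (2:ℝ) else 1) else 0 := by
    rintro ⟨⟨k, l⟩, hp⟩ ⟨⟨a, b⟩, hq⟩
    have hlk : l ≤ k := hlt _ hp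
    have hba : b ≤ a := hlt _ hq
    have hqp : (⟨⟨a, b⟩, hq⟩ : {p : Fin n × Fin n // p ∈ s}) = ⟨⟨k, l⟩, hp⟩ ↔ a = k ∧ b = l := by
      simp [Subtype.ext_iff, Prod.ext_iff]
    simp only [hM, Matrix.of_apply, Matrix.one_apply, hqp]
    by_cases hkl : k = l
    · subst hkl
      by_cases hak : a = k
      · subst hak
        by_cases hbk : b = a
        · simp [hbk]
        · simp [hbk, Ne.symm hbk]
      · simp [hak]
    · simp only [hkl, if_false]
      by_cases hak : a = k
      · subst hak
        by_cases hbl : b = l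
        · subst hbl; simp
        · simp [hbl, Ne.symm hbl]
      · by_cases hal : a = l
        · subst hal
          have hbk : ¬ (k = b) := fun h =>
            hak (le_antisymm (h ▸ hba) (lt_of_le_of_ne hlk (Ne.symm hkl)).le).symm
          simp [hak, hbk]
        · simp [hak, hal]
  have hinj : Function.Injective M.mulVecLin := by
    rw [← LinearMap.ker_eq_bot, LinearMap.ker_eq_bot']
    intro v hv
    funext p
    have h0 : M.mulVec v (p.val.1, p.val.2) = 0 := by
      rw [show M.mulVec v = 0 from hv]; rfl
    rw [Matrix.mulVec, dotProduct] at h0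
    have : ∑ q, M (p.val.1, p.val.2) q * v q
        = (if p.val.1 = p.val.2 then (2:ℝ) else 1) * v p := by
      rw [Finset.sum_eq_single p]
      · rw [key p p]; simp
      · intro q _ hq; rw [key p q]; simp [hq]
      · intro h; exact absurd (Finset.mem_univ p) h
    rw [this] at h0
    have hne : (if p.val.1 = p.val.2 then (2:ℝ) else 1) ≠ 0 := by
      split <;> norm_num
    have := mul_eq_zero.mp h0
    simpa [hne] using this
  have hcard : Fintype.card {p : Fin n × Fin n // p ∈ s} = s.card := Fintype.card_coe s
  rw [Matrix.rank, LinearMap.finrank_range_of_inj hinj]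
  simp [hcard]
end
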